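/- A graph morphism g from the twisted m-cube to the twisted n-cube is dimension-preserving if and only if all non-empty fibres of g have the same cardinality, i.e., there exists a natural number c such that for every vertex y in the range of g, the preimage g⁻¹ {y} has exactly c elements. -/

import Mathlib

/-- Edge relation of the twisted n-cube. -/
def TwE (n : ℕ) (x y : Fin n → Bool) : Prop :=
  x = y ∨ ∃ i : Fin n, (∀ j, j ≠ i → x j = y j) ∧ y i = !(x i) ∧
    (x i = true ↔ Odd (Finset.univ.filter (fun j : Fin n => j < i ∧ x j = false)).card)

/-- Graph morphisms between directed graphs given by edge relations. -/
def IsGraphHom {V V' : Type*} (E : V → V → Prop) (E' : V' → V' → Prop) (g : V → V') : Prop :=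
  ∀ x y, E x y → E' (g x) (g y)

/-- The pair (x, y) is a non-loop edge flipping exactly coordinate i. -/
def Flips {n : ℕ} (x y : Fin n → Bool) (i : Fin n) : Prop :=
  x i ≠ y i ∧ ∀ j, j ≠ i → x j = y j

/-- A map between cube vertex sets is dimension-preserving. -/
def DimPres {m n : ℕ} (g : (Fin m → Bool) → (Fin n → Bool)) : Prop :=
  ∀ x₁ y₁ x₂ y₂ (i : Fin m), Flips x₁ y₁ i → Flips x₂ y₂ i →
    (g x₁ = g y₁ ∧ g x₂ = g y₂) ∨
    ∃ j : Fin n, Flips (g x₁) (g y₁) j ∧ Flips (g x₂) (g y₂) j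

/-!
Both conditions are equivalent to `g` being *coordinatewise*: each coordinate direction `i` of
the source cube is either collapsed by `g` or sent to a single direction `j` of the target.

If `g` is coordinatewise, distinct non-collapsed directions go to distinct directions: otherwise
an `i`-edge and its translate along `i'` (which have the same orientation in the twisted cube)
would land on one `j`-edge traversed both ways. Hence `g x = g y` iff `x` and `y` agree on the
non-collapsed coordinates, and every fibre is a subcube of the same dimension.

Conversely, the twisted cube carries a Gray code (`rank`) along which every edge points forward
and consecutive vertices are adjacent. A morphism is therefore monotone along this Hamiltonian
path, its fibres are intervals of it, and if they all have `c` elements then `c = 2 ^ d` and the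
fibres are the aligned blocks of length `2 ^ d`, i.e. the subcubes fixing the first `m - d`
coordinates. Since the fibres are subcubes, the images of the two parallel sides of each square
are parallel, which makes `g` coordinatewise.
-/

lemma Nat.testBit_sum_two_pow (s : Finset ℕ) (t : ℕ) :
    (∑ i ∈ s, 2 ^ i).testBit t = decide (t ∈ s) := by
  rw [Bool.eq_iff_iff, decide_eq_true_iff, ← Nat.mem_bitIndices, ← List.mem_toFinset,
    Finset.toFinset_bitIndices_sum_two_pow]

lemma Nat.xor_two_pow_sub_one_eq_add_one {a k : ℕ} (hk : a.testBit k = false)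
    (hlow : ∀ j < k, a.testBit j = true) : a ^^^ (2 ^ (k + 1) - 1) = a + 1 := by
  have hmod : a % 2 ^ (k + 1) = 2 ^ k - 1 := Nat.eq_of_testBit_eq fun j => by
    rw [Nat.testBit_mod_two_pow, Nat.testBit_two_pow_sub_one]
    rcases lt_trichotomy j k with hj | rfl | hj
    · simp [hj, hlow j hj, Nat.lt_succ_of_lt hj]
    · simp [hk]
    · simp [hj.not_gt, show ¬ j < k + 1 by omega]
  have hsplit : a + 1 = 2 ^ (k + 1) * (a / 2 ^ (k + 1)) + 2 ^ k := by
    have := Nat.div_add_mod a (2 ^ (k + 1))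
    have := Nat.one_le_two_pow (n := k)
    omega
  refine Nat.eq_of_testBit_eq fun j => ?_
  rw [hsplit, Nat.testBit_two_pow_mul_add _ (Nat.pow_lt_pow_succ one_lt_two), Nat.testBit_xor,
    Nat.testBit_two_pow_sub_one, Nat.testBit_two_pow, Nat.testBit_div_two_pow]
  rcases lt_trichotomy j k with hj | rfl | hj
  · simp [hlow j hj, Nat.lt_succ_of_lt hj, hj.ne']
  · simp [hk]
  · simp [show ¬ j < k + 1 by omega, show j - (k + 1) + (k + 1) = j by omega]

lemma Finset.dvd_card_of_card_fiber {α β : Type*} [DecidableEq β] {s : Finset α} {f : α → β}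
    {c : ℕ} (h : ∀ a ∈ s, (s.filter fun b => f b = f a).card = c) : c ∣ s.card := by
  refine ⟨(s.image f).card, ?_⟩
  rw [Finset.card_eq_sum_card_image f s, Finset.sum_const_nat, mul_comm]
  intro y hy
  obtain ⟨a, ha, rfl⟩ := Finset.mem_image.mp hy
  exact h a ha

lemma Finset.card_filter_le_eq_card_filter_lt_add {α β : Type*} [LinearOrder β] (s : Finset α)
    (h : α → β) (a : α) :
    (s.filter fun b => h b ≤ h a).card =
      (s.filter fun b => h b < h a).card + (s.filter fun b => h b = h a).card := by
  rw [← Finset.card_filter_add_card_filter_not (s := s.filter _) (fun b => h b < h a),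
    Finset.filter_filter, Finset.filter_filter]
  congr 2 <;> ext b <;> simp only [Finset.mem_filter]
  · exact and_congr_right fun _ => ⟨And.right, fun h' => ⟨h'.le, h'⟩⟩
  · exact and_congr_right fun _ => by rw [not_lt, le_antisymm_iff]

section MonotoneFibres

variable {β : Type*} [LinearOrder β] {h : ℕ → β} {N c : ℕ}

lemma Nat.card_filter_lt_eq_mul_div_of_monotoneOn (hmono : MonotoneOn h (Set.Iio N))
    (hfib : ∀ a < N, ((Finset.range N).filter fun b => h b = h a).card = c) {a : ℕ}
    (ha : a < N) :
    ((Finset.range N).filter fun b => h b < h a).card = c * (a / c) := by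
  obtain ⟨q, hq⟩ := Finset.dvd_card_of_card_fiber
    (s := (Finset.range N).filter fun b => h b < h a) (f := h) (c := c) fun b hb => by
      rw [Finset.mem_filter, Finset.mem_range] at hb
      rw [Finset.filter_filter, ← hfib b hb.1]
      congr 1
      exact Finset.filter_congr fun b' _ => ⟨And.right, fun h' => ⟨h' ▸ hb.2, h'⟩⟩
  have hle : q * c ≤ a := by
    rw [mul_comm, ← hq]
    refine (Finset.card_le_card fun b hb => ?_).trans_eq (Finset.card_range a)
    rw [Finset.mem_filter, Finset.mem_range] at hb
    rw [Finset.mem_range]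
    by_contra! hab
    exact (hmono (Set.mem_Iio.mpr ha) (Set.mem_Iio.mpr hb.1) hab).not_gt hb.2
  have hlt : a < (q + 1) * c := by
    rw [add_mul, one_mul, mul_comm, ← hq, ← hfib a ha,
      ← Finset.card_filter_le_eq_card_filter_lt_add, ← Nat.add_one_le_iff,
      ← Finset.card_range (a + 1)]
    refine Finset.card_le_card fun b hb => ?_
    rw [Finset.mem_range] at hb
    simp only [Finset.mem_filter, Finset.mem_range]
    exact ⟨by omega, hmono (by simp; omega) (Set.mem_Iio.mpr ha) (by omega)⟩
  rw [hq, Nat.div_eq_of_lt_le hle hlt]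

lemma Nat.eq_iff_div_eq_div_of_monotoneOn (hmono : MonotoneOn h (Set.Iio N))
    (hfib : ∀ a < N, ((Finset.range N).filter fun b => h b = h a).card = c)
    {a b : ℕ} (ha : a < N) (hb : b < N) : h a = h b ↔ a / c = b / c := by
  have hc : 0 < c := hfib a ha ▸ Finset.card_pos.mpr ⟨a, by simp [ha]⟩
  have hbelow := fun {a} ha => Nat.card_filter_lt_eq_mul_div_of_monotoneOn hmono hfib (a := a) ha
  have hstrict : ∀ a b, a < N → b < N → h a < h b → c * (a / c) + c ≤ c * (b / c) :=
    fun a b ha hb hab => calc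
      c * (a / c) + c = ((Finset.range N).filter fun b' => h b' ≤ h a).card := by
        rw [Finset.card_filter_le_eq_card_filter_lt_add, hbelow ha, hfib a ha]
      _ ≤ ((Finset.range N).filter fun b' => h b' < h b).card :=
        Finset.card_le_card fun x hx => by
          simp only [Finset.mem_filter] at hx ⊢
          exact ⟨hx.1, hx.2.trans_lt hab⟩
      _ = c * (b / c) := hbelow hb
  constructor
  · intro hab
    rw [← Nat.mul_right_inj hc.ne', ← hbelow ha, ← hbelow hb, hab]
  · intro hab
    by_contra hne
    rcases lt_or_gt_of_ne hne with hlt | hlt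
    · have := hstrict a b ha hb hlt
      rw [hab] at this
      omega
    · have := hstrict b a hb ha hlt
      rw [hab] at this
      omega

end MonotoneFibres

namespace TwistedCube

variable {m n : ℕ}

def flipAt (x : Fin m → Bool) (i : Fin m) : Fin m → Bool := Function.update x i (!x i)

@[simp] lemma flipAt_self (x : Fin m → Bool) (i : Fin m) : flipAt x i i = !x i := by
  simp [flipAt]

lemma flipAt_of_ne (x : Fin m → Bool) {i j : Fin m} (h : j ≠ i) : flipAt x i j = x j :=
  Function.update_of_ne h _ _

@[simp] lemma flipAt_flipAt (x : Fin m → Bool) (i : Fin m) : flipAt (flipAt x i) i = x := by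
  simp [flipAt]

lemma flipAt_comm (x : Fin m → Bool) (i k : Fin m) :
    flipAt (flipAt x i) k = flipAt (flipAt x k) i := by
  by_cases h : i = k
  · rw [h]
  · simp only [flipAt, Function.update_of_ne h, Function.update_of_ne (Ne.symm h),
      Function.update_comm h]

lemma flipAt_ne_self (x : Fin m → Bool) (i : Fin m) : flipAt x i ≠ x :=
  fun h => Bool.not_ne_self (x i) (by simpa using congrFun h i)

lemma flipAt_inj {u : Fin n → Bool} {j j' : Fin n} : flipAt u j = flipAt u j' ↔ j = j' := by
  refine ⟨fun h => by_contra fun hne => ?_, congrArg _⟩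
  have := congrFun h j
  rw [flipAt_self, flipAt_of_ne u hne] at this
  exact Bool.not_ne_self _ this

lemma eq_flipAt_comm {x y : Fin m → Bool} {i : Fin m} : y = flipAt x i ↔ x = flipAt y i := by
  constructor <;> rintro rfl <;> simp

lemma flips_iff {x y : Fin m → Bool} {i : Fin m} : Flips x y i ↔ y = flipAt x i := by
  constructor
  · rintro ⟨hi, hne⟩
    funext j
    by_cases hj : j = i
    · subst hj
      simpa [Bool.eq_not, eq_comm] using hi
    · rw [flipAt_of_ne x hj, hne j hj]
  · rintro rfl
    exact ⟨by simp, fun j hj => (flipAt_of_ne x hj).symm⟩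

lemma eq_of_flipAt_flipAt_eq {u : Fin n → Bool} {a b c d : Fin n}
    (h : flipAt (flipAt u a) b = flipAt (flipAt u c) d) (hab : a ≠ b) (hac : a ≠ c) :
    a = d := by
  by_contra had
  have := congrFun h a
  rw [flipAt_of_ne _ hab, flipAt_self, flipAt_of_ne _ had, flipAt_of_ne _ hac] at this
  exact Bool.not_ne_self _ this

lemma flipAt_induction {P : (Fin m → Bool) → Prop} (x₀ : Fin m → Bool) (h₀ : P x₀)
    (hflip : ∀ x i, P x → P (flipAt x i)) (x : Fin m → Bool) : P x := by
  classical
  suffices ∀ s : Finset (Fin m), ∀ x, (∀ i ∉ s, x i = x₀ i) → P x from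
    this Finset.univ x (by simp)
  intro s
  induction s using Finset.induction_on with
  | empty =>
    intro x hx
    rwa [funext fun i => hx i (Finset.notMem_empty i)]
  | insert a s _ ih =>
    intro x hx
    have hagree : ∀ y : Fin m → Bool, y a = x₀ a → (∀ i, i ≠ a → y i = x i) → P y :=
      fun y hya hy => ih y fun i hi => by
        by_cases hia : i = a
        · rwa [hia]
        · rw [hy i hia, hx i (by simp [hia, hi])]
    by_cases ha : x a = x₀ a
    · exact hagree x ha fun _ _ => rfl
    · simpa using hflip _ a (hagree (flipAt x a) (by simpa [Bool.eq_not] using ha)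
        fun i hi => flipAt_of_ne x hi)

variable {g : (Fin m → Bool) → (Fin n → Bool)}

def IsCubeHom (g : (Fin m → Bool) → (Fin n → Bool)) : Prop :=
  ∀ x i, g (flipAt x i) = g x ∨ ∃ j, g (flipAt x i) = flipAt (g x) j

def Collapses (g : (Fin m → Bool) → (Fin n → Bool)) (i : Fin m) : Prop :=
  ∀ x, g (flipAt x i) = g x

def MapsFlip (g : (Fin m → Bool) → (Fin n → Bool)) (i : Fin m) (j : Fin n) : Prop :=
  ∀ x, g (flipAt x i) = flipAt (g x) j

def IsCoordinatewise (g : (Fin m → Bool) → (Fin n → Bool)) : Prop :=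
  ∀ i, Collapses g i ∨ ∃ j, MapsFlip g i j

lemma MapsFlip.not_collapses {i : Fin m} {j : Fin n} (h : MapsFlip g i j) : ¬ Collapses g i :=
  fun hc => flipAt_ne_self (g fun _ => false) j ((h _).symm.trans (hc _))

lemma MapsFlip.right_unique {i : Fin m} {j j' : Fin n} (h : MapsFlip g i j)
    (h' : MapsFlip g i j') : j = j' :=
  flipAt_inj.mp ((h fun _ => false).symm.trans (h' _))

lemma dimPres_iff_isCoordinatewise (hg : IsCubeHom g) : DimPres g ↔ IsCoordinatewise g := by
  constructor
  · intro hD i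
    by_contra! h
    obtain ⟨x₀, hx₀⟩ : ∃ x₀, g (flipAt x₀ i) ≠ g x₀ := by
      simpa [Collapses] using h.1
    obtain ⟨j, hj⟩ := (hg x₀ i).resolve_left hx₀
    refine h.2 j fun x => ?_
    rcases hD _ _ _ _ i (flips_iff.mpr rfl) (flips_iff.mpr rfl : Flips x (flipAt x i) i) with
      ⟨h₀, -⟩ | ⟨j', h₀, hx⟩
    · exact absurd h₀.symm hx₀
    · rw [flips_iff, hj, flipAt_inj] at h₀
      rwa [flips_iff, ← h₀] at hx
  · intro h x₁ y₁ x₂ y₂ i h₁ h₂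
    rw [flips_iff] at h₁ h₂
    subst h₁ h₂
    rcases h i with hc | ⟨j, hj⟩
    · exact Or.inl ⟨(hc x₁).symm, (hc x₂).symm⟩
    · exact Or.inr ⟨j, by rw [hj, flips_iff], by rw [hj, flips_iff]⟩

lemma IsCoordinatewise.eq_iff_eqOn (h : IsCoordinatewise g)
    (hinj : ∀ i i' j, MapsFlip g i j → MapsFlip g i' j → i = i') (x y : Fin m → Bool) :
    g x = g y ↔ Set.EqOn x y {i | ∃ j, MapsFlip g i j} := by
  have hdiff : ∀ x u, g x u ≠ g y u ↔ ∃ i, MapsFlip g i u ∧ x i ≠ y i := by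
    refine flipAt_induction y (by simp) fun x k hx u => ?_
    rcases h k with hk | ⟨j, hk⟩
    · have hne : ∀ i, MapsFlip g i u → flipAt x k i = x i := fun i hi =>
        flipAt_of_ne x fun hik => hi.not_collapses (hik ▸ hk)
      rw [hk, hx]
      exact exists_congr fun i => and_congr_right fun hi => by rw [hne i hi]
    · rw [hk]
      by_cases hu : u = j
      · subst hu
        have hiff : ∀ i, MapsFlip g i u ↔ i = k :=
          fun i => ⟨fun hi => hinj i k u hi hk, by rintro rfl; exact hk⟩
        have hxu := hx u
        simp only [hiff, exists_eq_left, flipAt_self, ne_eq, Bool.not_eq_eq_eq_not,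
          Bool.not_eq_not] at hxu ⊢
        exact not_iff_not.mp hxu
      · have hne : ∀ i, MapsFlip g i u → flipAt x k i = x i := fun i hi =>
          flipAt_of_ne x fun hik => hu (hi.right_unique (hik ▸ hk))
        rw [flipAt_of_ne _ hu, hx]
        exact exists_congr fun i => and_congr_right fun hi => by rw [hne i hi]
  constructor
  · rintro hxy i ⟨j, hj⟩
    by_contra hne
    exact (hdiff x j).mpr ⟨i, hj, hne⟩ (congrFun hxy j)
  · intro hxy
    funext u
    by_contra hne
    obtain ⟨i, hi, hne⟩ := (hdiff x u).mp hne
    exact hne (hxy ⟨u, hi⟩)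

lemma ncard_preimage_of_eq_iff_eqOn {S : Set (Fin m)} (hS : ∀ x y, g x = g y ↔ Set.EqOn x y S)
    (x : Fin m → Bool) : (g ⁻¹' {g x}).ncard = 2 ^ Sᶜ.ncard := by
  classical
  have hfib :
      g ⁻¹' {g x} = ↑(Fintype.piFinset fun i => if i ∈ S then {x i} else Finset.univ) := by
    ext z
    simp only [Set.mem_preimage, Set.mem_singleton_iff, hS, Fintype.coe_piFinset, Set.mem_pi,
      Set.mem_univ, true_implies]
    refine forall_congr' fun i => ?_
    split_ifs <;> simp [*]
  rw [hfib, Set.ncard_coe_finset, Fintype.card_piFinset, Set.ncard_eq_toFinset_card']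
  simp only [apply_ite Finset.card, Finset.card_singleton, Finset.card_univ, Fintype.card_bool]
  rw [Finset.prod_ite]
  simp only [Finset.prod_const_one, Finset.prod_const, one_mul]
  congr 2
  ext
  simp

lemma dir_eq_of_parallel {S : Set (Fin m)} (hS : ∀ x y, g x = g y ↔ Set.EqOn x y S)
    (hg : IsCubeHom g) {i k : Fin m} (hi : i ∈ S) (hk : k ∈ S) (hki : k ≠ i)
    {x : Fin m → Bool} {j j' : Fin n} (hj : g (flipAt x i) = flipAt (g x) j)
    (hj' : g (flipAt (flipAt x k) i) = flipAt (g (flipAt x k)) j') : j = j' := by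
  have hsep : ∀ y z, y i ≠ z i → g y ≠ g z := fun y z h e => h ((hS y z).mp e hi)
  obtain ⟨l, hl⟩ := (hg x k).resolve_left fun h =>
    Bool.not_ne_self (x k) (by simpa using (hS _ _).mp h hk)
  obtain ⟨l', hl'⟩ := (hg (flipAt x i) k).resolve_left fun h =>
    Bool.not_ne_self (x k) (by simpa [flipAt_of_ne x hki] using (hS _ _).mp h hk)
  rw [flipAt_comm, hl', hj, hl] at hj'
  refine eq_of_flipAt_flipAt_eq hj' (fun h => ?_) (fun h => ?_)
  · refine hsep (flipAt (flipAt x i) k) x (by simp [flipAt_of_ne _ (Ne.symm hki)]) ?_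
    rw [hl', hj, h, flipAt_flipAt]
  · refine hsep (flipAt x i) (flipAt x k) (by simp [flipAt_of_ne _ (Ne.symm hki)]) ?_
    rw [hj, hl, h]

lemma isCoordinatewise_of_eq_iff_eqOn {S : Set (Fin m)}
    (hS : ∀ x y, g x = g y ↔ Set.EqOn x y S) (hg : IsCubeHom g) : IsCoordinatewise g := by
  intro i
  by_cases hi : i ∈ S
  · right
    choose dir hdir using fun x => (hg x i).resolve_left fun h =>
      Bool.not_ne_self (x i) (by simpa using (hS _ _).mp h hi)
    have hstep : ∀ x k, dir (flipAt x k) = dir x := by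
      intro x k
      by_cases hk : k ∈ S
      · by_cases hki : k = i
        · subst hki
          have h := hdir (flipAt x k)
          rw [flipAt_flipAt, hdir x, eq_flipAt_comm, flipAt_inj] at h
          exact h.symm
        · exact (dir_eq_of_parallel hS hg hi hk hki (hdir x) (hdir _)).symm
      · have hcol : ∀ y, g (flipAt y k) = g y := fun y =>
          (hS _ _).mpr fun j hj => flipAt_of_ne y fun h => hk (h ▸ hj)
        have h := hdir (flipAt x k)
        rw [flipAt_comm, hcol, hdir, hcol, flipAt_inj] at h
        exact h.symm
    refine ⟨dir fun _ => false, fun x => ?_⟩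
    rw [hdir, flipAt_induction (P := fun x => dir x = dir fun _ => false) _ rfl
      (fun x k h => (hstep x k).trans h) x]
  · left
    intro x
    exact (hS _ _).mpr fun k hk => flipAt_of_ne x fun h => hi (h ▸ hk)

def falseParity (x : Fin m → Bool) (k : ℕ) : ZMod 2 :=
  ∑ j : Fin m, if (j : ℕ) < k ∧ x j = false then 1 else 0

lemma falseParity_zero (x : Fin m → Bool) : falseParity x 0 = 0 := by
  simp [falseParity]

lemma falseParity_congr {x y : Fin m → Bool} {k : ℕ}
    (h : ∀ j : Fin m, (j : ℕ) < k → x j = y j) : falseParity x k = falseParity y k :=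
  Finset.sum_congr rfl fun j _ => by
    by_cases hj : (j : ℕ) < k
    · rw [h j hj]
    · simp [hj]

lemma falseParity_succ (x : Fin m → Bool) (i : Fin m) :
    falseParity x (i + 1) = falseParity x i + if x i = false then 1 else 0 := by
  have hterm : ∀ j : Fin m, (if (j : ℕ) < i + 1 ∧ x j = false then 1 else 0 : ZMod 2) =
      (if (j : ℕ) < i ∧ x j = false then 1 else 0) +
        if i = j then (if x i = false then 1 else 0) else 0 := by
    intro j
    by_cases hj : j = i
    · subst hj
      simp
    · have : (j : ℕ) < i + 1 ↔ (j : ℕ) < i := by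
        have := Fin.val_ne_of_ne hj
        omega
      simp [this, Ne.symm hj]
  simp only [falseParity, hterm, Finset.sum_add_distrib, Finset.sum_ite_eq, Finset.mem_univ,
    if_true]

lemma falseParity_flipAt_of_le (x : Fin m → Bool) {i : Fin m} {k : ℕ} (h : k ≤ i) :
    falseParity (flipAt x i) k = falseParity x k :=
  falseParity_congr fun j hj => flipAt_of_ne x fun hji => by omega

lemma falseParity_flipAt_of_lt (x : Fin m → Bool) {i : Fin m} {k : ℕ} (h : i < k) :
    falseParity (flipAt x i) k = falseParity x k + 1 := by
  have hterm : ∀ j : Fin m, (if (j : ℕ) < k ∧ flipAt x i j = false then 1 else 0 : ZMod 2) =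
      (if (j : ℕ) < k ∧ x j = false then 1 else 0) + if i = j then 1 else 0 := by
    intro j
    by_cases hj : j = i
    · subst hj
      cases hx : x j <;> simp [h, hx]; rfl
    · simp [flipAt_of_ne x hj, Ne.symm hj]
  simp only [falseParity, hterm, Finset.sum_add_distrib, Finset.sum_ite_eq, Finset.mem_univ,
    if_true]

lemma eq_of_falseParity_eq {x y : Fin m → Bool} {j : Fin m}
    (h : falseParity x (j + 1) = falseParity y (j + 1)) (h' : falseParity x j = falseParity y j) :
    x j = y j := by
  rw [falseParity_succ, falseParity_succ, h', add_right_inj] at h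
  cases hx : x j <;> cases hy : y j <;> simp_all

def IsUp (x : Fin m → Bool) (i : Fin m) : Prop := falseParity x (i + 1) = 1

lemma isUp_iff (x : Fin m → Bool) (i : Fin m) :
    IsUp x i ↔
      (x i = true ↔ Odd (Finset.univ.filter (fun j : Fin m => j < i ∧ x j = false)).card) := by
  rw [IsUp, falseParity_succ, ← ZMod.natCast_eq_one_iff_odd, Finset.natCast_card_filter]
  change _ ↔ (_ ↔ falseParity x i = 1)
  generalize falseParity x i = p
  cases x i <;> revert p <;> decide

lemma twE_iff {x y : Fin m → Bool} :
    TwE m x y ↔ x = y ∨ ∃ i, IsUp x i ∧ y = flipAt x i := by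
  refine or_congr_right (exists_congr fun i => ?_)
  rw [isUp_iff, ← flips_iff, Flips, Bool.eq_not, ne_comm]
  tauto

lemma isUp_flipAt_self (x : Fin m → Bool) (i : Fin m) : IsUp (flipAt x i) i ↔ ¬ IsUp x i := by
  rw [IsUp, IsUp, falseParity_flipAt_of_lt x (Nat.lt_succ_self i)]
  generalize falseParity x (i + 1) = p
  revert p
  decide

lemma isUp_congr {x y : Fin m → Bool} {i : Fin m} (h : ∀ j, j ≤ i → x j = y j) :
    IsUp x i ↔ IsUp y i := by
  rw [IsUp, IsUp, falseParity_congr fun j hj => h j (Fin.le_def.mpr (Nat.lt_succ_iff.mp hj))]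

/-- A Gray code for the twisted cube: edges increase it, and consecutive values are joined by
edges (`exists_isUp_rank_flipAt_eq_succ`). -/
def rank (x : Fin m → Bool) : ℕ :=
  ∑ t ∈ (Finset.range m).filter (fun t => falseParity x (m - t) = 0), 2 ^ t

lemma testBit_rank (x : Fin m → Bool) (t : ℕ) :
    (rank x).testBit t = decide (t < m ∧ falseParity x (m - t) = 0) := by
  simp [rank, Nat.testBit_sum_two_pow]

lemma rank_lt (x : Fin m → Bool) : rank x < 2 ^ m :=
  Nat.lt_pow_two_of_testBit _ fun t ht => by simp [testBit_rank, ht.not_gt]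

lemma testBit_rank_flipAt (x : Fin m → Bool) (i : Fin m) (t : ℕ) :
    (rank (flipAt x i)).testBit t = ((rank x).testBit t ^^ decide (t + i < m)) := by
  rw [testBit_rank, testBit_rank]
  by_cases ht : t + i < m
  · rw [falseParity_flipAt_of_lt x (show (i : ℕ) < m - t by omega)]
    generalize falseParity x (m - t) = p
    revert p
    simp [ht, show t < m by omega]
    decide
  · rw [falseParity_flipAt_of_le x (show m - t ≤ i by omega)]
    simp [ht]

lemma rank_flipAt (x : Fin m → Bool) (i : Fin m) :
    rank (flipAt x i) = rank x ^^^ (2 ^ (m - i) - 1) :=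
  Nat.eq_of_testBit_eq fun t => by
    simp only [testBit_rank_flipAt, Nat.testBit_xor, Nat.testBit_two_pow_sub_one,
      Nat.lt_sub_iff_add_lt]

lemma rank_div_two_pow_eq_iff {x y : Fin m → Bool} (d : ℕ) :
    rank x / 2 ^ d = rank y / 2 ^ d ↔ Set.EqOn x y {i | (i : ℕ) + d < m} := by
  constructor
  · intro h
    have hpar : ∀ k, k + d ≤ m → falseParity x k = falseParity y k := by
      intro k hk
      rcases Nat.eq_zero_or_pos k with rfl | hk0
      · rw [falseParity_zero, falseParity_zero]
      have hbit := congrArg (Nat.testBit · (m - d - k)) h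
      simp only [Nat.testBit_div_two_pow, testBit_rank, show m - d - k + d < m by omega,
        show m - (m - d - k + d) = k by omega, true_and, decide_eq_decide] at hbit
      revert hbit
      generalize falseParity x k = p
      generalize falseParity y k = q
      revert p q
      decide
    intro j (hj : (j : ℕ) + d < m)
    exact eq_of_falseParity_eq (hpar _ (by omega)) (hpar _ (by omega))
  · intro h
    refine Nat.eq_of_testBit_eq fun t => ?_
    simp only [Nat.testBit_div_two_pow, testBit_rank]
    by_cases ht : t + d < m
    · rw [falseParity_congr fun j hj => h (show (j : ℕ) + d < m by omega)]
    · simp [ht]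

lemma rank_injective : Function.Injective (rank : (Fin m → Bool) → ℕ) := fun x y h =>
  funext fun j => (rank_div_two_pow_eq_iff 0).mp (by rw [h]) (by simp)

lemma exists_rank_eq {a : ℕ} (ha : a < 2 ^ m) : ∃ x : Fin m → Bool, rank x = a := by
  have himage : Finset.univ.image rank = Finset.range (2 ^ m) :=
    Finset.eq_of_subset_of_card_le (fun a h => by
      obtain ⟨x, -, rfl⟩ := Finset.mem_image.mp h
      exact Finset.mem_range.mpr (rank_lt x))
      (by simp [Finset.card_image_of_injective _ rank_injective])
  have hmem : a ∈ Finset.univ.image (rank : (Fin m → Bool) → ℕ) := by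
    rw [himage]
    exact Finset.mem_range.mpr ha
  simpa using hmem

lemma rank_invFun_rank {a : ℕ} (ha : a < 2 ^ m) :
    rank (Function.invFun rank a : Fin m → Bool) = a :=
  Function.invFun_eq (exists_rank_eq ha)

lemma rank_lt_rank_flipAt {x : Fin m → Bool} {i : Fin m} (h : IsUp x i) :
    rank x < rank (flipAt x i) := by
  have hbit : (rank x).testBit (m - 1 - i) = false := by
    rw [IsUp] at h
    simp [testBit_rank, show m - (m - 1 - i) = i + 1 by omega, h]
  refine Nat.lt_of_testBit (m - 1 - i) hbit ?_ fun j hj => ?_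
  · rw [testBit_rank_flipAt, hbit, Bool.false_xor, decide_eq_true_iff]
    omega
  · rw [testBit_rank_flipAt, decide_eq_false (by omega), Bool.xor_false]

lemma exists_isUp_rank_flipAt_eq_succ {x : Fin m → Bool} (h : rank x + 1 < 2 ^ m) :
    ∃ i, IsUp x i ∧ rank (flipAt x i) = rank x + 1 := by
  classical
  -- flip the coordinate of the lowest unset bit of `rank x`
  have hex : ∃ k, (rank x).testBit k = false := ⟨m, Nat.testBit_lt_two_pow (rank_lt x)⟩
  set k := Nat.find hex
  have hk : (rank x).testBit k = false := Nat.find_spec hex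
  have hlow : ∀ j < k, (rank x).testBit j = true := fun j hj => by
    simpa using Nat.find_min hex hj
  have hkm : k < m := by
    by_contra! hkm
    have := Nat.le_of_testBit (n := 2 ^ m - 1) (m := rank x) fun j hj => by
      simp only [Nat.testBit_two_pow_sub_one, decide_eq_true_eq] at hj
      exact hlow j (by omega)
    omega
  refine ⟨⟨m - 1 - k, by omega⟩, ?_, ?_⟩
  · simp only [testBit_rank, hkm, true_and, decide_eq_false_iff_not] at hk
    rw [IsUp, show m - 1 - k + 1 = m - k by omega]
    generalize falseParity x (m - k) = p at hk
    revert p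
    decide
  · rw [rank_flipAt, show m - (m - 1 - k) = k + 1 by omega,
      Nat.xor_two_pow_sub_one_eq_add_one hk hlow]

lemma rank_le_of_twE {x y : Fin m → Bool} (h : TwE m x y) : rank x ≤ rank y := by
  rcases twE_iff.mp h with rfl | ⟨i, hi, rfl⟩
  · exact le_rfl
  · exact (rank_lt_rank_flipAt hi).le

lemma twE_antisymm {x y : Fin m → Bool} (hxy : TwE m x y) (hyx : TwE m y x) : x = y :=
  rank_injective ((rank_le_of_twE hxy).antisymm (rank_le_of_twE hyx))

lemma isCubeHom_of_isGraphHom (hg : IsGraphHom (TwE m) (TwE n) g) : IsCubeHom g := by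
  intro x i
  have hedge : TwE m x (flipAt x i) ∨ TwE m (flipAt x i) x := by
    by_cases h : IsUp x i
    · exact Or.inl (twE_iff.mpr (Or.inr ⟨i, h, rfl⟩))
    · exact Or.inr (twE_iff.mpr (Or.inr ⟨i, (isUp_flipAt_self x i).mpr h, by simp⟩))
  rcases hedge with e | e <;> rcases twE_iff.mp (hg _ _ e) with h | ⟨j, -, h⟩
  · exact Or.inl h.symm
  · exact Or.inr ⟨j, h⟩
  · exact Or.inl h
  · exact Or.inr ⟨j, eq_flipAt_comm.mp h⟩

lemma eq_of_mapsFlip_of_mapsFlip (hg : IsGraphHom (TwE m) (TwE n) g) {i i' : Fin m} {j : Fin n}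
    (hi : MapsFlip g i j) (hi' : MapsFlip g i' j) : i = i' := by
  by_contra hne
  wlog hlt : i < i' generalizing i i'
  · exact this hi' hi (Ne.symm hne) (lt_of_le_of_ne (not_lt.mp hlt) (Ne.symm hne))
  -- an `i`-edge and its translate along `i'` have the same orientation, but `g` maps them
  -- onto the same `j`-edge traversed in opposite directions
  obtain ⟨x, hx⟩ : ∃ x, IsUp x i := by
    by_cases h : IsUp (fun _ => false) i
    · exact ⟨_, h⟩
    · exact ⟨_, (isUp_flipAt_self _ i).mpr h⟩
  have hx' : IsUp (flipAt x i') i :=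
    (isUp_congr fun k hk => (flipAt_of_ne x (hk.trans_lt hlt).ne).symm).mp hx
  have e₁ := hg _ _ (twE_iff.mpr (Or.inr ⟨i, hx, rfl⟩))
  have e₂ := hg _ _ (twE_iff.mpr (Or.inr ⟨i, hx', rfl⟩))
  rw [hi] at e₁
  rw [hi, hi', flipAt_flipAt] at e₂
  exact flipAt_ne_self _ _ (twE_antisymm e₂ e₁)

lemma monotoneOn_rank_comp (hg : IsGraphHom (TwE m) (TwE n) g) :
    MonotoneOn (fun a => rank (g (Function.invFun rank a))) (Set.Iio (2 ^ m)) := by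
  refine monotoneOn_of_le_succ Set.ordConnected_Iio fun a _ ha ha' => ?_
  rw [Set.mem_Iio] at ha ha'
  rw [Order.succ_eq_add_one] at ha' ⊢
  obtain ⟨i, hi, hsucc⟩ := exists_isUp_rank_flipAt_eq_succ (by rwa [rank_invFun_rank ha])
  have hstep : Function.invFun rank (a + 1) = flipAt (Function.invFun rank a) i :=
    rank_injective (by rw [rank_invFun_rank ha', hsucc, rank_invFun_rank ha])
  rw [hstep]
  exact rank_le_of_twE (hg _ _ (twE_iff.mpr (Or.inr ⟨i, hi, rfl⟩)))

lemma exists_eq_iff_eqOn_of_ncard_fiber (hg : IsGraphHom (TwE m) (TwE n) g) {c : ℕ}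
    (hc : ∀ y ∈ Set.range g, (g ⁻¹' {y}).ncard = c) :
    ∃ S : Set (Fin m), ∀ x y, g x = g y ↔ Set.EqOn x y S := by
  classical
  have hfib : ∀ x, (Finset.univ.filter fun z => g z = g x).card = c := fun x => by
    rw [← hc _ ⟨x, rfl⟩, ← Set.ncard_coe_finset]
    congr
    ext
    simp
  obtain ⟨d, -, rfl⟩ : ∃ d ≤ m, c = 2 ^ d := (Nat.dvd_prime_pow Nat.prime_two).mp <| by
    simpa using Finset.dvd_card_of_card_fiber (s := Finset.univ) fun x _ => hfib x
  set v := Function.invFun (rank : (Fin m → Bool) → ℕ)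
  have hv : ∀ x, v (rank x) = x := Function.leftInverse_invFun rank_injective
  have hcard : ∀ a < 2 ^ m,
      ((Finset.range (2 ^ m)).filter fun b => rank (g (v b)) = rank (g (v a))).card = 2 ^ d := by
    intro a ha
    rw [← hfib (v a)]
    refine Finset.card_nbij' v rank (fun b hb => ?_) (fun x hx => ?_) (fun b hb => ?_)
      (fun x _ => hv x)
    · simp_all [rank_injective.eq_iff]
    · simp_all [rank_lt]
    · exact rank_invFun_rank (Finset.mem_range.mp (Finset.mem_filter.mp hb).1)
  refine ⟨{i | (i : ℕ) + d < m}, fun x y => ?_⟩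
  rw [← rank_div_two_pow_eq_iff, ← Nat.eq_iff_div_eq_div_of_monotoneOn (monotoneOn_rank_comp hg)
    hcard (rank_lt x) (rank_lt y)]
  simp only [v, hv, rank_injective.eq_iff]

end TwistedCube

theorem stmt14 (m n : ℕ) (g : (Fin m → Bool) → (Fin n → Bool))
    (hg : IsGraphHom (TwE m) (TwE n) g) :
    DimPres g ↔ ∃ c : ℕ, ∀ y ∈ Set.range g, (g ⁻¹' {y}).ncard = c := by
  open TwistedCube in
  rw [dimPres_iff_isCoordinatewise (isCubeHom_of_isGraphHom hg)]
  constructor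
  · intro hcw
    refine ⟨2 ^ {i | ∃ j, MapsFlip g i j}ᶜ.ncard, ?_⟩
    rintro _ ⟨x, rfl⟩
    exact ncard_preimage_of_eq_iff_eqOn
      (hcw.eq_iff_eqOn fun _ _ _ => eq_of_mapsFlip_of_mapsFlip hg) x
  · rintro ⟨c, hc⟩
    obtain ⟨S, hS⟩ := exists_eq_iff_eqOn_of_ncard_fiber hg hc
    exact isCoordinatewise_of_eq_iff_eqOn hS (isCubeHom_of_isGraphHom hg)
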